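/- On the elliptic curve E over ℚ(σ) given by y² + (σ²-18σ+1)xy = x(x-1)(x + σ² - 18σ), the point ρ₆ = (-σ(σ-18), σ(σ-18)(σ²-18σ+1)) has order exactly 6, with 2ρ₆ = (1, -σ²+18σ-1), 3ρ₆ = (0,0), 4ρ₆ = (1,0), and 5ρ₆ = (-σ²+18σ, 0). -/

import Mathlib

open WeierstrassCurve

/-- The elliptic curve over `ℚ(σ)` given by
`y² + (σ²-18σ+1)xy = x(x-1)(x + σ² - 18σ) = x³ + (σ²-18σ-1)x² + (-σ²+18σ)x`. -/
noncomputable def W18 : WeierstrassCurve.Affine (RatFunc ℚ) where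
  a₁ := RatFunc.X ^ 2 - 18 * RatFunc.X + 1
  a₂ := RatFunc.X ^ 2 - 18 * RatFunc.X - 1
  a₃ := 0
  a₄ := -RatFunc.X ^ 2 + 18 * RatFunc.X
  a₆ := 0

local notation "σ" => (RatFunc.X : RatFunc ℚ)

/-! The curve is the member `t = σ² - 18σ` of the family `y² + (t + 1)xy = x(x - 1)(x + t)`, and the
computation is uniform in `t`. Doubling `ρ = (-t, t(t + 1))` along the tangent of slope `-t` gives
`2ρ = (1, -(t + 1))`, and the chord through `2ρ` and `ρ` has slope `-(t + 1)` and meets the curve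
again at `(0, 0)`, which is its own negative. So `3ρ` has order two and `ρ` has order six, while
`4ρ = -2ρ` and `5ρ = -ρ` are read off from the negation `y ↦ -y - (t + 1)x`. -/

theorem addOrderOf_eq_six {G : Type*} [AddMonoid G] {a : G} (h6 : 6 • a = 0) (h2 : 2 • a ≠ 0)
    (h3 : 3 • a ≠ 0) : addOrderOf a = 6 := by
  have hdvd : addOrderOf a ∣ 6 := addOrderOf_dvd_of_nsmul_eq_zero h6
  have hndvd2 : ¬addOrderOf a ∣ 2 := mt addOrderOf_dvd_iff_nsmul_eq_zero.1 h2
  have hndvd3 : ¬addOrderOf a ∣ 3 := mt addOrderOf_dvd_iff_nsmul_eq_zero.1 h3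
  have hle : addOrderOf a ≤ 6 := Nat.le_of_dvd (by norm_num) hdvd
  interval_cases addOrderOf a <;> omega

theorem RatFunc.aeval_X_ne_zero {K : Type*} [Field K] {p : Polynomial K} {a : K}
    (hp : p.eval a ≠ 0) : Polynomial.aeval (RatFunc.X : RatFunc K) p ≠ 0 := fun h ↦
  RatFunc.transcendental_X (K := K) ⟨p, fun hp0 ↦ hp (by rw [hp0, Polynomial.eval_zero]), h⟩

namespace WeierstrassCurve.Affine.Point

theorem exists_neg_some_eq {R : Type*} [CommRing R] {W : Affine R} {x y y' : R}
    (h : W.Nonsingular x y) (hy : W.negY x y = y') :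
    ∃ h' : W.Nonsingular x y', -some _ _ h = some _ _ h' := by
  subst hy
  exact ⟨_, neg_some h⟩

theorem exists_some_add_some_eq {F : Type*} [Field F] [DecidableEq F] {W : Affine F}
    {x₁ y₁ x₂ y₂ x₃ y₃ : F} (h₁ : W.Nonsingular x₁ y₁) (h₂ : W.Nonsingular x₂ y₂)
    (hxy : ¬(x₁ = x₂ ∧ y₁ = W.negY x₂ y₂)) (hx₃ : W.addX x₁ x₂ (W.slope x₁ x₂ y₁ y₂) = x₃)
    (hy₃ : W.addY x₁ x₂ y₁ (W.slope x₁ x₂ y₁ y₂) = y₃) :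
    ∃ h₃ : W.Nonsingular x₃ y₃, some _ _ h₁ + some _ _ h₂ = some _ _ h₃ := by
  subst hx₃ hy₃
  exact ⟨_, add_some hxy⟩

end WeierstrassCurve.Affine.Point

section OrderSixCurve

open WeierstrassCurve.Affine

variable {F : Type*} [Field F] {t : F}

def orderSixCurve (t : F) : WeierstrassCurve.Affine F where
  a₁ := t + 1
  a₂ := t - 1
  a₃ := 0
  a₄ := -t
  a₆ := 0

theorem orderSixCurve_Y_ne_negY (ht : t ≠ 0) (hc : t + 1 ≠ 0) :
    t * (t + 1) ≠ (orderSixCurve t).negY (-t) (t * (t + 1)) := fun h ↦ by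
  simp only [negY, orderSixCurve] at h
  exact mul_ne_zero ht hc (by linear_combination h)

theorem orderSixCurve_nonsingular (ht : t ≠ 0) (hc : t + 1 ≠ 0) :
    (orderSixCurve t).Nonsingular (-t) (t * (t + 1)) := by
  rw [nonsingular_iff, equation_iff]
  exact ⟨by simp only [orderSixCurve]; ring, Or.inr (orderSixCurve_Y_ne_negY ht hc)⟩

variable [DecidableEq F]

theorem orderSixCurve_slope_double (ht : t ≠ 0) (hc : t + 1 ≠ 0) :
    (orderSixCurve t).slope (-t) (-t) (t * (t + 1)) (t * (t + 1)) = -t := by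
  have hy := orderSixCurve_Y_ne_negY ht hc
  rw [slope_of_Y_ne rfl hy, div_eq_iff (sub_ne_zero.2 hy)]
  simp only [negY, orderSixCurve]
  ring

theorem orderSixCurve_slope_chord (hc : t + 1 ≠ 0) :
    (orderSixCurve t).slope 1 (-t) (-(t + 1)) (t * (t + 1)) = -(t + 1) := by
  have hx : (1 : F) - -t = t + 1 := by ring
  rw [slope_of_X_ne (sub_ne_zero.1 (hx ▸ hc)), hx, div_eq_iff hc]
  ring

theorem orderSixCurve_multiples (ht : t ≠ 0) (hc : t + 1 ≠ 0) :
    ∃ (h1 : (orderSixCurve t).Nonsingular (-t) (t * (t + 1)))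
      (h2 : (orderSixCurve t).Nonsingular 1 (-(t + 1)))
      (h3 : (orderSixCurve t).Nonsingular 0 0)
      (h4 : (orderSixCurve t).Nonsingular 1 0)
      (h5 : (orderSixCurve t).Nonsingular (-t) 0),
      addOrderOf (Point.some _ _ h1) = 6 ∧
      2 • Point.some _ _ h1 = .some _ _ h2 ∧
      3 • Point.some _ _ h1 = .some _ _ h3 ∧
      4 • Point.some _ _ h1 = .some _ _ h4 ∧
      5 • Point.some _ _ h1 = .some _ _ h5 := by
  have h1 := orderSixCurve_nonsingular ht hc
  obtain ⟨h2, hdouble⟩ := Point.exists_some_add_some_eq (x₃ := 1) (y₃ := -(t + 1)) h1 h1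
    (fun h ↦ orderSixCurve_Y_ne_negY ht hc h.2)
    (by rw [orderSixCurve_slope_double ht hc]; simp only [addX, orderSixCurve]; ring)
    (by
      rw [orderSixCurve_slope_double ht hc]
      simp only [addY, negAddY, negY, addX, orderSixCurve]
      ring)
  obtain ⟨h3, hchord⟩ := Point.exists_some_add_some_eq (x₃ := 0) (y₃ := 0) h2 h1
    (fun h ↦ hc (by linear_combination h.1))
    (by rw [orderSixCurve_slope_chord hc]; simp only [addX, orderSixCurve]; ring)
    (by
      rw [orderSixCurve_slope_chord hc]
      simp only [addY, negAddY, negY, addX, orderSixCurve]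
      ring)
  obtain ⟨h4, hneg2⟩ := Point.exists_neg_some_eq (y' := 0) h2
    (by simp only [negY, orderSixCurve]; ring)
  obtain ⟨h5, hneg1⟩ := Point.exists_neg_some_eq (y' := 0) h1
    (by simp only [negY, orderSixCurve]; ring)
  have horder2 : Point.some _ _ h3 + Point.some _ _ h3 = 0 :=
    Point.add_self_of_Y_eq (by simp only [negY, orderSixCurve]; ring)
  set ρ := Point.some _ _ h1
  have hρ₂ : 2 • ρ = .some _ _ h2 := by rw [two_nsmul, hdouble]
  have hρ₃ : 3 • ρ = .some _ _ h3 := by rw [succ_nsmul, hρ₂, hchord]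
  have hρ₆ : 6 • ρ = 0 := by rw [show 6 = 3 + 3 from rfl, add_nsmul, hρ₃, horder2]
  refine ⟨h1, h2, h3, h4, h5, addOrderOf_eq_six hρ₆ (hρ₂ ▸ Point.some_ne_zero h2)
    (hρ₃ ▸ Point.some_ne_zero h3), hρ₂, hρ₃, ?_, ?_⟩
  · rw [← hneg2, ← hρ₂]
    exact eq_neg_of_add_eq_zero_left (by rw [← add_nsmul]; exact hρ₆)
  · rw [← hneg1]
    exact eq_neg_of_add_eq_zero_left (by rw [← succ_nsmul]; exact hρ₆)

end OrderSixCurve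

theorem W18_eq_orderSixCurve : W18 = orderSixCurve (σ ^ 2 - 18 * σ) := by
  ext <;> simp only [W18, orderSixCurve]
  ring

theorem sigma_sq_sub_eighteen_mul_ne_zero : σ ^ 2 - 18 * σ ≠ 0 := by
  have h := RatFunc.aeval_X_ne_zero (K := ℚ) (p := .X ^ 2 - 18 * .X) (a := 1) (by norm_num)
  simpa only [map_sub, map_mul, map_pow, map_ofNat, Polynomial.aeval_X] using h

theorem sigma_sq_sub_eighteen_mul_add_one_ne_zero : σ ^ 2 - 18 * σ + 1 ≠ 0 := by
  have h := RatFunc.aeval_X_ne_zero (K := ℚ) (p := .X ^ 2 - 18 * .X + 1) (a := 0) (by norm_num)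
  simpa only [map_add, map_sub, map_mul, map_pow, map_one, map_ofNat, Polynomial.aeval_X] using h

open Classical in
/-- The point `ρ₆ = (-σ(σ-18), σ(σ-18)(σ²-18σ+1))` on `W18` has order exactly 6, with the listed
multiples. -/
theorem W18_rho6_order_six :
    ∃ (h1 : W18.Nonsingular (-σ * (σ - 18)) (σ * (σ - 18) * (σ ^ 2 - 18 * σ + 1)))
      (h2 : W18.Nonsingular 1 (-σ ^ 2 + 18 * σ - 1))
      (h3 : W18.Nonsingular 0 0)
      (h4 : W18.Nonsingular 1 0)
      (h5 : W18.Nonsingular (-σ ^ 2 + 18 * σ) 0),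
      addOrderOf (WeierstrassCurve.Affine.Point.some _ _ h1) = 6 ∧
      2 • (WeierstrassCurve.Affine.Point.some _ _ h1) = .some _ _ h2 ∧
      3 • (WeierstrassCurve.Affine.Point.some _ _ h1) = .some _ _ h3 ∧
      4 • (WeierstrassCurve.Affine.Point.some _ _ h1) = .some _ _ h4 ∧
      5 • (WeierstrassCurve.Affine.Point.some _ _ h1) = .some _ _ h5 := by
  rw [W18_eq_orderSixCurve, show -σ * (σ - 18) = -(σ ^ 2 - 18 * σ) by ring,
    show σ * (σ - 18) * (σ ^ 2 - 18 * σ + 1) = (σ ^ 2 - 18 * σ) * (σ ^ 2 - 18 * σ + 1) by ring,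
    show -σ ^ 2 + 18 * σ - 1 = -(σ ^ 2 - 18 * σ + 1) by ring,
    show -σ ^ 2 + 18 * σ = -(σ ^ 2 - 18 * σ) by ring]
  exact orderSixCurve_multiples sigma_sq_sub_eighteen_mul_ne_zero
    sigma_sq_sub_eighteen_mul_add_one_ne_zero
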